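/- Let τ be an involution in Σ_N and let C(τ) be its centralizer. Then the map σ ↦ S(σ,τ) is a group homomorphism from C(τ) to {±1}, where S(σ,τ) = (−1)^{#{ {a,b} : a<b, τ(a)=b, σ(a)>σ(b) }}. -/

import Mathlib

open Equiv Finset

def Ssign {N : ℕ} (σ τ : Equiv.Perm (Fin N)) : ℤ :=
  (-1) ^ (Finset.univ.filter (fun p : Fin N × Fin N =>
      p.1 < p.2 ∧ τ p.1 = p.2 ∧ σ p.2 < σ p.1)).card

private def Pset {N : ℕ} (τ : Equiv.Perm (Fin N)) : Finset (Fin N × Fin N) :=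
  Finset.univ.filter (fun p => p.1 < p.2 ∧ τ p.1 = p.2)

private lemma Ssign_eq_prod {N : ℕ} (σ τ : Equiv.Perm (Fin N)) :
    Ssign σ τ = ∏ p ∈ Pset τ, (if σ p.2 < σ p.1 then (-1 : ℤ) else 1) := by
  rw [Pset, Finset.prod_ite, Finset.prod_const, Finset.prod_const_one, mul_one,
    Finset.filter_filter, Ssign]
  congr 2
  ext p
  simp [and_assoc]

private def gmap {N : ℕ} (σ' : Equiv.Perm (Fin N)) (p : Fin N × Fin N) : Fin N × Fin N :=
  if σ' p.1 < σ' p.2 then (σ' p.1, σ' p.2) else (σ' p.2, σ' p.1)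

private lemma gmap_mem {N : ℕ} {τ σ' : Equiv.Perm (Fin N)} (hτ : τ * τ = 1)
    (hc : τ * σ' = σ' * τ) {p : Fin N × Fin N} (hp : p ∈ Pset τ) :
    gmap σ' p ∈ Pset τ := by
  have hcomm : ∀ x, τ (σ' x) = σ' (τ x) := fun x => by
    have := congrArg (fun f : Equiv.Perm (Fin N) => f x) hc
    simpa using this
  have hττ : ∀ x, τ (τ x) = x := fun x => by
    have := congrArg (fun f : Equiv.Perm (Fin N) => f x) hτ
    simpa using this
  simp only [Pset, Finset.mem_filter, Finset.mem_univ, true_and] at hp ⊢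
  obtain ⟨h1, h2⟩ := hp
  have hne : σ' p.1 ≠ σ' p.2 := fun h => absurd (σ'.injective h) h1.ne
  rw [gmap]
  split_ifs with h
  · exact ⟨h, by rw [hcomm, h2]⟩
  · refine ⟨lt_of_le_of_ne (not_lt.mp h) hne.symm, ?_⟩
    rw [hcomm, ← h2, hττ]

private lemma gmap_gmap {N : ℕ} (σ' : Equiv.Perm (Fin N)) {p : Fin N × Fin N}
    (hp : p.1 < p.2) : gmap σ'⁻¹ (gmap σ' p) = p := by
  have hne : σ' p.1 ≠ σ' p.2 := fun h => absurd (σ'.injective h) hp.ne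
  rcases lt_or_gt_of_ne hne with h | h
  · simp [gmap, h, hp]
  · simp [gmap, asymm h, asymm hp]

private lemma Ssign_mul {N : ℕ} {τ σ σ' : Equiv.Perm (Fin N)} (hτ : τ * τ = 1)
    (hc' : τ * σ' = σ' * τ) :
    Ssign (σ * σ') τ = Ssign σ τ * Ssign σ' τ := by
  have hcinv : τ * σ'⁻¹ = σ'⁻¹ * τ := by
    have : Commute τ σ' := hc'
    exact this.inv_right
  simp only [Ssign_eq_prod]
  have hstep : ∀ p ∈ Pset τ,
      (if (σ * σ') p.2 < (σ * σ') p.1 then (-1 : ℤ) else 1)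
      = (if σ (gmap σ' p).2 < σ (gmap σ' p).1 then (-1 : ℤ) else 1)
        * (if σ' p.2 < σ' p.1 then (-1 : ℤ) else 1) := by
    intro p hp
    simp only [Pset, Finset.mem_filter, Finset.mem_univ, true_and] at hp
    have hne : σ' p.1 ≠ σ' p.2 := fun h => absurd (σ'.injective h) hp.1.ne
    have hne2 : σ (σ' p.1) ≠ σ (σ' p.2) := fun h => hne (σ.injective h)
    simp only [Equiv.Perm.mul_apply, gmap]
    rcases lt_or_gt_of_ne hne with h | h
    · simp [h, asymm h]
      exact if_congr Iff.rfl rfl rfl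
    · simp only [if_neg (asymm h), if_pos h]
      rcases lt_or_gt_of_ne hne2 with h2 | h2
      · simp [h2, asymm h2]
      · simp [h2, asymm h2]
  rw [Finset.prod_congr rfl hstep, Finset.prod_mul_distrib]
  congr 1
  refine Finset.prod_nbij' (gmap σ') (gmap σ'⁻¹)
    (fun p hp => gmap_mem hτ hc' hp) (fun p hp => gmap_mem hτ hcinv hp)
    (fun p hp => ?_) (fun p hp => ?_) (fun p hp => rfl)
  · simp only [Pset, Finset.mem_filter, Finset.mem_univ, true_and] at hp
    exact gmap_gmap σ' hp.1
  · simp only [Pset, Finset.mem_filter, Finset.mem_univ, true_and] at hp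
    have := gmap_gmap σ'⁻¹ (p := p) hp.1
    simpa using this

/-- For an involution τ, the map σ ↦ S(σ,τ) is a homomorphism on the
centralizer of τ, with values in {±1}. -/
theorem Ssign_centralizer_hom {N : ℕ} (τ : Equiv.Perm (Fin N)) (hτ : τ * τ = 1) :
    (∀ σ, σ ∈ Subgroup.centralizer {τ} → Ssign σ τ = 1 ∨ Ssign σ τ = -1) ∧
    (Ssign (1 : Equiv.Perm (Fin N)) τ = 1) ∧
    ∀ σ σ', σ ∈ Subgroup.centralizer {τ} → σ' ∈ Subgroup.centralizer {τ} →
      Ssign (σ * σ') τ = Ssign σ τ * Ssign σ' τ := by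
  refine ⟨fun σ _ => ?_, ?_, fun σ σ' hσ hσ' => ?_⟩
  · rcases Nat.even_or_odd ((Finset.univ.filter (fun p : Fin N × Fin N =>
      p.1 < p.2 ∧ τ p.1 = p.2 ∧ σ p.2 < σ p.1)).card) with h | h
    · left; exact h.neg_one_pow
    · right; exact h.neg_one_pow
  · have : (Finset.univ.filter (fun p : Fin N × Fin N =>
        p.1 < p.2 ∧ τ p.1 = p.2 ∧ (1 : Equiv.Perm (Fin N)) p.2 < (1 : Equiv.Perm (Fin N)) p.1)) = ∅ :=
      Finset.filter_false_of_mem (fun p _ => by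
        rintro ⟨h1, -, h2⟩
        simp only [Equiv.Perm.one_apply] at h2
        exact absurd h2 (asymm h1))
    rw [Ssign, this, Finset.card_empty, pow_zero]
  · have hc' : τ * σ' = σ'⁻¹⁻¹ * τ := by
      rw [inv_inv]
      exact (Subgroup.mem_centralizer_singleton_iff.mp hσ').symm
    rw [inv_inv] at hc'
    exact Ssign_mul hτ hc'
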